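/- Let X be a regular Hausdorff topological space. Then X is k-scattered (i.e., every nonempty closed subspace A ⊆ X contains a compact subset K ⊆ A with nonempty interior in A) if and only if X is weakly homeomorphic to a compact Hausdorff topological space. -/

import Mathlib

/-!
Iterate transfinitely the k-derivative `A ↦ {x ∈ A | A is not locally compact at x}`. In a
k-scattered space each step removes a point of every nonempty closed set, so every point drops out
at some stage, its rank. The strata of constant rank are locally compact, and the sets
`{rank ≤ α}` are open, so on any nonempty subset the points of minimal rank form a relatively open
piece of a single stratum. Hence `X` is weakly homeomorphic to the disjoint sum of its strata, a
locally compact Hausdorff space; moving one point to infinity turns it into the one-point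
compactification of the rest, a compact Hausdorff space.

Conversely, if `f : X → Y` is a weak homeomorphism onto a compact Hausdorff space and `A ⊆ X` is
closed, `f` is continuous on a relatively open `U ⊆ A` and `f⁻¹` on a relatively open piece of the
compact set `closure (f '' U)`; a compact neighbourhood inside that piece is mapped back by `f⁻¹`
onto a compact neighbourhood of a point of `A`.
-/

open Set Function Topology

/-- A map `f : X → Y` is weakly discontinuous if every nonempty subset `A ⊆ X`
contains a nonempty subset `U`, open in the subspace topology of `A`, on which
`f` restricts to a continuous map. -/
def WeaklyDiscontinuous {X Y : Type*} [TopologicalSpace X] [TopologicalSpace Y]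
    (f : X → Y) : Prop :=
  ∀ A : Set X, A.Nonempty → ∃ U : Set X, U ⊆ A ∧ U.Nonempty ∧
    (∃ V : Set X, IsOpen V ∧ U = A ∩ V) ∧ ContinuousOn f U

/-- Topological spaces `X` and `Y` are weakly homeomorphic if there is a bijection
`f : X → Y` such that both `f` and its inverse are weakly discontinuous. -/
def WeaklyHomeomorphic (X : Type*) (Y : Type*) [TopologicalSpace X] [TopologicalSpace Y] :
    Prop :=
  ∃ (f : X → Y) (g : Y → X), Function.LeftInverse g f ∧ Function.RightInverse g f ∧
    WeaklyDiscontinuous f ∧ WeaklyDiscontinuous g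

universe u

section WeakHomeomorphism

variable {X Y Z : Type*} [TopologicalSpace X] [TopologicalSpace Y] [TopologicalSpace Z]

theorem Continuous.weaklyDiscontinuous {f : X → Y} (hf : Continuous f) :
    WeaklyDiscontinuous f :=
  fun A hA => ⟨A, subset_rfl, hA, ⟨univ, isOpen_univ, (inter_univ A).symm⟩, hf.continuousOn⟩

theorem WeaklyDiscontinuous.comp {g : Y → Z} {f : X → Y} (hg : WeaklyDiscontinuous g)
    (hf : WeaklyDiscontinuous f) : WeaklyDiscontinuous (g ∘ f) := by
  intro A hA
  obtain ⟨-, -, hU, ⟨V, hV, rfl⟩, hfU⟩ := hf A hA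
  obtain ⟨-, -, hW, ⟨O, hO, rfl⟩, hgW⟩ := hg (f '' (A ∩ V)) (hU.image f)
  obtain ⟨_, ⟨a, haU, rfl⟩, haO⟩ := hW
  obtain ⟨u, hu, hfu⟩ := continuousOn_iff'.1 hfU O hO
  have hau : a ∈ u ∩ (A ∩ V) := hfu ▸ ⟨haO, haU⟩
  refine ⟨A ∩ (V ∩ u), inter_subset_left, ⟨a, hau.2.1, hau.2.2, hau.1⟩,
    ⟨V ∩ u, hV.inter hu, rfl⟩, hgW.comp (hfU.mono fun x hx => ⟨hx.1, hx.2.1⟩) ?_⟩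
  intro x ⟨hxA, hxV, hxu⟩
  have hx : x ∈ f ⁻¹' O ∩ (A ∩ V) := hfu ▸ ⟨hxu, hxA, hxV⟩
  exact ⟨mem_image_of_mem f hx.2, hx.1⟩

theorem weaklyDiscontinuous_of_continuousOn_compl_singleton [T1Space X] {f : X → Y} {p : X}
    (hf : ContinuousOn f {p}ᶜ) : WeaklyDiscontinuous f := by
  intro A hA
  by_cases hAp : (A ∩ {p}ᶜ).Nonempty
  · exact ⟨A ∩ {p}ᶜ, inter_subset_left, hAp, ⟨{p}ᶜ, isOpen_compl_singleton, rfl⟩,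
      hf.mono inter_subset_right⟩
  · have hAsub : A ⊆ {p} := fun x hx => not_not.1 fun hxp => hAp ⟨x, hx, hxp⟩
    exact ⟨A, subset_rfl, hA, ⟨univ, isOpen_univ, (inter_univ A).symm⟩,
      (subsingleton_singleton.anti hAsub).continuousOn f⟩

theorem Homeomorph.weaklyHomeomorphic (e : X ≃ₜ Y) : WeaklyHomeomorphic X Y :=
  ⟨e, e.symm, e.symm_apply_apply, e.apply_symm_apply, e.continuous.weaklyDiscontinuous,
    e.symm.continuous.weaklyDiscontinuous⟩

theorem WeaklyHomeomorphic.trans (hXY : WeaklyHomeomorphic X Y) (hYZ : WeaklyHomeomorphic Y Z) :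
    WeaklyHomeomorphic X Z := by
  obtain ⟨f, f', hf'f, hff', hf, hf'⟩ := hXY
  obtain ⟨g, g', hg'g, hgg', hg, hg'⟩ := hYZ
  exact ⟨g ∘ f, f' ∘ g', hg'g.comp hf'f, hgg'.comp hff', hg.comp hf, hf'.comp hg'⟩

theorem weaklyHomeomorphic_onePoint_compl_singleton [T1Space X] (p : X) :
    WeaklyHomeomorphic X (OnePoint ({p}ᶜ : Set X)) := by
  classical
  let f : X → OnePoint ({p}ᶜ : Set X) := fun x =>
    if h : x = p then OnePoint.infty else ((⟨x, h⟩ : ({p}ᶜ : Set X)) : OnePoint _)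
  let g : OnePoint ({p}ᶜ : Set X) → X := fun y => y.elim p Subtype.val
  refine ⟨f, g, fun x => ?_, fun y => ?_, ?_, ?_⟩
  · by_cases h : x = p <;> simp [f, g, h]
  · induction y using OnePoint.rec with
    | infty => simp [f, g]
    | coe z => simp [f, g, show (z : X) ≠ p from z.2]
  · refine weaklyDiscontinuous_of_continuousOn_compl_singleton (p := p) ?_
    rw [continuousOn_iff_continuous_domRestrict]
    convert OnePoint.continuous_coe using 1
    funext z
    simp [f, show (z : X) ≠ p from z.2]
  · refine weaklyDiscontinuous_of_continuousOn_compl_singleton (p := OnePoint.infty) ?_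
    refine continuousOn_of_forall_continuousAt fun y hy => ?_
    induction y using OnePoint.rec with
    | infty => exact absurd rfl hy
    | coe z => exact OnePoint.continuousAt_coe.2 continuous_subtype_val.continuousAt

end WeakHomeomorphism

section Sigma

variable {X : Type*} [TopologicalSpace X] {ι : Type*}

instance {X : ι → Type*} [∀ i, TopologicalSpace (X i)] [∀ i, WeaklyLocallyCompactSpace (X i)] :
    WeaklyLocallyCompactSpace (Σ i, X i) where
  exists_compact_mem_nhds := fun ⟨i, x⟩ =>
    let ⟨K, hK, hKx⟩ := exists_compact_mem_nhds x
    ⟨Sigma.mk i '' K, hK.image continuous_sigmaMk, isOpenMap_sigmaMk.image_mem_nhds hKx⟩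

theorem weaklyDiscontinuous_sigmaFiberEquiv_symm [LinearOrder ι] [WellFoundedLT ι] {r : X → ι}
    (hr : ∀ i, IsOpen (r ⁻¹' Iic i)) : WeaklyDiscontinuous (Equiv.sigmaFiberEquiv r).symm := by
  intro A hA
  obtain ⟨_, ⟨a, haA, rfl⟩, hmin⟩ := wellFounded_lt.has_min (r '' A) (hA.image r)
  have hr_eq : ∀ x ∈ A ∩ r ⁻¹' Iic (r a), r x = r a := fun x hx =>
    le_antisymm hx.2 (not_lt.1 (hmin _ (mem_image_of_mem r hx.1)))
  refine ⟨A ∩ r ⁻¹' Iic (r a), inter_subset_left, ⟨a, haA, le_rfl⟩, ⟨_, hr _, rfl⟩, ?_⟩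
  rw [continuousOn_iff_continuous_domRestrict]
  have : (A ∩ r ⁻¹' Iic (r a)).domRestrict (Equiv.sigmaFiberEquiv r).symm =
      fun x => ⟨r a, x.1, hr_eq x.1 x.2⟩ :=
    funext fun x => Sigma.subtype_ext (hr_eq x.1 x.2) rfl
  rw [this]
  exact continuous_sigmaMk.comp (continuous_subtype_val.subtype_mk _)

theorem weaklyHomeomorphic_sigma_fiber [LinearOrder ι] [WellFoundedLT ι] {r : X → ι}
    (hr : ∀ i, IsOpen (r ⁻¹' Iic i)) : WeaklyHomeomorphic X (Σ i, {x // r x = i}) :=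
  ⟨(Equiv.sigmaFiberEquiv r).symm, Equiv.sigmaFiberEquiv r,
    (Equiv.sigmaFiberEquiv r).apply_symm_apply, (Equiv.sigmaFiberEquiv r).symm_apply_apply,
    weaklyDiscontinuous_sigmaFiberEquiv_symm hr,
    (continuous_sigma fun _ => continuous_subtype_val).weaklyDiscontinuous⟩

/-- A copy of `Σ i, {x // r x = i}` on the carrier `X`, so that it lives in the universe of `X`
even when `ι` does not. -/
def FiberSum (_r : X → ι) : Type _ := X

instance (r : X → ι) : TopologicalSpace (FiberSum r) :=
  .induced (Equiv.sigmaFiberEquiv r).symm inferInstance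

def FiberSum.homeomorph (r : X → ι) : FiberSum r ≃ₜ Σ i, {x // r x = i} :=
  (show FiberSum r ≃ _ from (Equiv.sigmaFiberEquiv r).symm).toHomeomorphOfIsInducing ⟨rfl⟩

instance [T2Space X] (r : X → ι) : T2Space (FiberSum r) :=
  (FiberSum.homeomorph r).isEmbedding.t2Space

instance (r : X → ι) [∀ i, WeaklyLocallyCompactSpace {x // r x = i}] :
    WeaklyLocallyCompactSpace (FiberSum r) :=
  (FiberSum.homeomorph r).isClosedEmbedding.weaklyLocallyCompactSpace

theorem weaklyHomeomorphic_fiberSum [LinearOrder ι] [WellFoundedLT ι] {r : X → ι}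
    (hr : ∀ i, IsOpen (r ⁻¹' Iic i)) : WeaklyHomeomorphic X (FiberSum r) :=
  (weaklyHomeomorphic_sigma_fiber hr).trans (FiberSum.homeomorph r).symm.weaklyHomeomorphic

end Sigma

theorem exists_compactSpace_weaklyHomeomorphic (X : Type u) [TopologicalSpace X]
    [WeaklyLocallyCompactSpace X] [T2Space X] :
    ∃ (Y : Type u) (_ : TopologicalSpace Y),
      CompactSpace Y ∧ T2Space Y ∧ WeaklyHomeomorphic X Y := by
  rcases isEmpty_or_nonempty X with _ | ⟨⟨p⟩⟩
  · exact ⟨X, _, inferInstance, inferInstance, (Homeomorph.refl X).weaklyHomeomorphic⟩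
  · have : LocallyCompactSpace ({p}ᶜ : Set X) := isOpen_compl_singleton.locallyCompactSpace
    exact ⟨_, _, inferInstance, inferInstance, weaklyHomeomorphic_onePoint_compl_singleton p⟩

section KDerivedSet

variable {X : Type*} [TopologicalSpace X]

def KScattered (X : Type*) [TopologicalSpace X] : Prop :=
  ∀ A : Set X, IsClosed A → A.Nonempty → ∃ x ∈ A, ∃ K ⊆ A, IsCompact K ∧ K ∈ 𝓝[A] x

theorem kScattered_iff :
    KScattered X ↔ ∀ A : Set X, IsClosed A → A.Nonempty →
      ∃ K : Set X, K ⊆ A ∧ IsCompact K ∧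
        ∃ V : Set X, IsOpen V ∧ (A ∩ V).Nonempty ∧ A ∩ V ⊆ K := by
  refine forall₃_congr fun A _ _ => ⟨?_, ?_⟩
  · rintro ⟨x, hxA, K, hKA, hK, hKx⟩
    obtain ⟨V, hV, hxV, hVK⟩ := mem_nhdsWithin.1 hKx
    exact ⟨K, hKA, hK, V, hV, ⟨x, hxA, hxV⟩, inter_comm A V ▸ hVK⟩
  · rintro ⟨K, hKA, hK, V, hV, ⟨x, hxA, hxV⟩, hVK⟩
    exact ⟨x, hxA, K, hKA, hK, mem_nhdsWithin.2 ⟨V, hV, hxV, inter_comm V A ▸ hVK⟩⟩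

theorem IsCompact.exists_isCompact_subset_mem_nhdsWithin [T2Space X] {K V : Set X} {x : X}
    (hK : IsCompact K) (hxK : x ∈ K) (hV : V ∈ 𝓝 x) :
    ∃ L ⊆ K ∩ V, IsCompact L ∧ L ∈ 𝓝[K] x := by
  have := isCompact_iff_compactSpace.1 hK
  obtain ⟨C, hC, hCV, hCc⟩ := local_compact_nhds (x := (⟨x, hxK⟩ : K))
    (preimage_coe_mem_nhds_subtype.2 (mem_nhdsWithin_of_mem_nhds hV))
  exact ⟨(↑) '' C, image_subset_iff.2 fun y hy => ⟨y.2, hCV hy⟩,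
    hCc.image continuous_subtype_val, mem_nhds_subtype_iff_nhdsWithin.1 hC⟩

def kDerivedSet (A : Set X) : Set X :=
  A \ {x | ∃ K ⊆ A, IsCompact K ∧ K ∈ 𝓝[A] x}

theorem isOpen_setOf_exists_isCompact_mem_nhdsWithin (A : Set X) :
    IsOpen {x | ∃ K ⊆ A, IsCompact K ∧ K ∈ 𝓝[A] x} := by
  refine isOpen_iff_mem_nhds.2 fun x ⟨K, hKA, hK, hKx⟩ => ?_
  rw [mem_nhdsWithin_iff_eventually] at hKx
  filter_upwards [hKx.eventually_nhds] with y hy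
  exact ⟨K, hKA, hK, mem_nhdsWithin_iff_eventually.2 hy⟩

theorem IsClosed.kDerivedSet {A : Set X} (hA : IsClosed A) : IsClosed (kDerivedSet A) :=
  hA.sdiff (isOpen_setOf_exists_isCompact_mem_nhdsWithin A)

theorem KScattered.kDerivedSet_ssubset (h : KScattered X) {A : Set X} (hA : IsClosed A)
    (hne : A.Nonempty) : kDerivedSet A ⊂ A := by
  obtain ⟨x, hxA, hx⟩ := h A hA hne
  exact (ssubset_iff_of_subset sdiff_subset).2 ⟨x, hxA, fun hx' => hx'.2 hx⟩

theorem weaklyLocallyCompactSpace_diff_kDerivedSet [T2Space X] (A : Set X) :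
    WeaklyLocallyCompactSpace ↥(A \ kDerivedSet A) where
  exists_compact_mem_nhds := by
    rintro ⟨x, hxA, hx⟩
    obtain ⟨K, hKA, hK, hKx⟩ : ∃ K ⊆ A, IsCompact K ∧ K ∈ 𝓝[A] x :=
      not_not.1 fun h => hx ⟨hxA, h⟩
    obtain ⟨L, hLK, hL, hLx⟩ := hK.exists_isCompact_subset_mem_nhdsWithin
      (mem_of_mem_nhdsWithin hxA hKx)
      ((isOpen_setOf_exists_isCompact_mem_nhdsWithin A).mem_nhds ⟨K, hKA, hK, hKx⟩)
    have hLA : L ⊆ A \ kDerivedSet A := fun y hy => ⟨hKA (hLK hy).1, fun hy' => hy'.2 (hLK hy).2⟩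
    refine ⟨(↑) ⁻¹' L, ?_, ?_⟩
    · rw [Subtype.isCompact_iff, Subtype.image_preimage_coe, inter_eq_right.2 hLA]
      exact hL
    · exact preimage_coe_mem_nhds_subtype.2
        (nhdsWithin_mono _ sdiff_subset (nhdsWithin_le_of_mem hKx hLx))

end KDerivedSet

section KRank

variable {X : Type u} [TopologicalSpace X]

/-- The `α`-th iterated `kDerivedSet` of `X`: `univ` at `0`, `kDerivedSet` of the previous term at
successors and the intersection of the previous terms at limits. -/
noncomputable def kDerivedSeq (α : Ordinal.{u}) : Set X :=
  ⋂ β : Iio α, kDerivedSet (kDerivedSeq β)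
termination_by α
decreasing_by exact β.2

theorem mem_kDerivedSeq {x : X} {α : Ordinal.{u}} :
    x ∈ kDerivedSeq α ↔ ∀ β < α, x ∈ kDerivedSet (kDerivedSeq β) := by
  rw [kDerivedSeq]
  simp

theorem isClosed_kDerivedSeq (α : Ordinal.{u}) : IsClosed (kDerivedSeq α : Set X) := by
  induction α using WellFoundedLT.induction with
  | _ α ih =>
    rw [kDerivedSeq]
    exact isClosed_iInter fun β => (ih β β.2).kDerivedSet

theorem kDerivedSeq_subset_kDerivedSet {α β : Ordinal.{u}} (h : β < α) :
    kDerivedSeq α ⊆ kDerivedSet (kDerivedSeq β : Set X) :=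
  fun _ hx => mem_kDerivedSeq.1 hx β h

theorem KScattered.exists_notMem_kDerivedSet (h : KScattered X) (x : X) :
    ∃ α : Ordinal.{u}, x ∉ kDerivedSet (kDerivedSeq α) := by
  by_contra! hx
  have : StrictAnti (kDerivedSeq : Ordinal.{u} → Set X) := fun β _ hβα =>
    (kDerivedSeq_subset_kDerivedSet hβα).trans_ssubset
      (h.kDerivedSet_ssubset (isClosed_kDerivedSeq β) ⟨x, (hx β).1⟩)
  exact not_injective_of_ordinal _ this.injective

noncomputable def kRank (x : X) : Ordinal.{u} :=
  sInf {α | x ∉ kDerivedSet (kDerivedSeq α)}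

theorem mem_kDerivedSeq_kRank (x : X) : x ∈ kDerivedSeq (kRank x) :=
  mem_kDerivedSeq.2 fun _ hβ => not_not.1 (notMem_of_lt_csInf' hβ)

theorem KScattered.notMem_kDerivedSet_kRank (h : KScattered X) (x : X) :
    x ∉ kDerivedSet (kDerivedSeq (kRank x)) :=
  csInf_mem (h.exists_notMem_kDerivedSet x)

theorem KScattered.kRank_le_iff (h : KScattered X) {x : X} {α : Ordinal.{u}} :
    kRank x ≤ α ↔ ∃ β ≤ α, x ∉ kDerivedSet (kDerivedSeq β) :=
  ⟨fun hle => ⟨_, hle, h.notMem_kDerivedSet_kRank x⟩,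
    fun ⟨_, hβα, hβ⟩ => (csInf_le' hβ).trans hβα⟩

theorem KScattered.isOpen_kRank_preimage_Iic (h : KScattered X) (α : Ordinal.{u}) :
    IsOpen (kRank ⁻¹' Iic α : Set X) := by
  have : (kRank ⁻¹' Iic α : Set X) = ⋃ β ∈ Iic α, (kDerivedSet (kDerivedSeq β))ᶜ := by
    ext x
    simp [h.kRank_le_iff]
  rw [this]
  exact isOpen_biUnion fun β _ => (isClosed_kDerivedSeq β).kDerivedSet.isOpen_compl

theorem KScattered.setOf_kRank_eq (h : KScattered X) (α : Ordinal.{u}) :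
    {x : X | kRank x = α} = kDerivedSeq α \ kDerivedSet (kDerivedSeq α) := by
  ext x
  refine ⟨?_, fun ⟨hxα, hx⟩ => le_antisymm (csInf_le' hx) (not_lt.1 fun hlt => ?_)⟩
  · rintro rfl
    exact ⟨mem_kDerivedSeq_kRank x, h.notMem_kDerivedSet_kRank x⟩
  · exact h.notMem_kDerivedSet_kRank x (kDerivedSeq_subset_kDerivedSet hlt hxα)

theorem KScattered.weaklyLocallyCompactSpace_kRank_fiber [T2Space X] (h : KScattered X)
    (α : Ordinal.{u}) : WeaklyLocallyCompactSpace {x : X // kRank x = α} :=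
  have := weaklyLocallyCompactSpace_diff_kDerivedSet (kDerivedSeq α : Set X)
  (Homeomorph.setCongr (h.setOf_kRank_eq α)).isClosedEmbedding.weaklyLocallyCompactSpace

end KRank

theorem WeaklyHomeomorphic.kScattered {X Y : Type*} [TopologicalSpace X] [TopologicalSpace Y]
    [CompactSpace Y] [T2Space Y] (hXY : WeaklyHomeomorphic X Y) : KScattered X := by
  obtain ⟨f, g, hgf, -, hf, hg⟩ := hXY
  intro A hA hAne
  obtain ⟨-, -, hU, ⟨O, hO, rfl⟩, hfU⟩ := hf A hAne
  obtain ⟨-, -, hW, ⟨V, hV, rfl⟩, hgW⟩ := hg (closure (f '' (A ∩ O))) (hU.image f).closure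
  obtain ⟨y, hyB, hyV⟩ := hW
  obtain ⟨_, hfaV, a, haU, rfl⟩ := mem_closure_iff.1 hyB V hV hyV
  obtain ⟨K, hKW, hK, hKa⟩ := isClosed_closure.isCompact.exists_isCompact_subset_mem_nhdsWithin
    (subset_closure (mem_image_of_mem f haU)) (hV.mem_nhds hfaV)
  have hfK : f ⁻¹' K ∈ 𝓝[A] a := by
    rw [← nhdsWithin_inter_of_mem' (mem_nhdsWithin_of_mem_nhds (hO.mem_nhds haU.2))]
    exact (hfU a haU).tendsto_nhdsWithin (fun x hx => subset_closure (mem_image_of_mem f hx)) hKa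
  refine ⟨a, haU.1, g '' K ∩ A, inter_subset_right,
    (hK.image_of_continuousOn (hgW.mono hKW)).inter_right hA, ?_⟩
  filter_upwards [hfK, self_mem_nhdsWithin] with b hb hbA using ⟨⟨f b, hb, hgf b⟩, hbA⟩

theorem kScattered_iff_weaklyHomeomorphic_to_compact_general
    {X : Type u} [TopologicalSpace X] [T2Space X] :
    (∀ A : Set X, IsClosed A → A.Nonempty →
      ∃ K : Set X, K ⊆ A ∧ IsCompact K ∧
        ∃ V : Set X, IsOpen V ∧ (A ∩ V).Nonempty ∧ A ∩ V ⊆ K) ↔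
    ∃ (Y : Type u) (tY : TopologicalSpace Y),
      CompactSpace Y ∧ T2Space Y ∧ WeaklyHomeomorphic X Y := by
  rw [← kScattered_iff]
  refine ⟨fun h => ?_, fun ⟨Y, _, _, _, hXY⟩ => hXY.kScattered⟩
  have := h.weaklyLocallyCompactSpace_kRank_fiber
  obtain ⟨Y, _, hY, hY2, hXY⟩ :=
    exists_compactSpace_weaklyHomeomorphic (FiberSum (kRank : X → Ordinal.{u}))
  exact ⟨Y, _, hY, hY2, (weaklyHomeomorphic_fiberSum h.isOpen_kRank_preimage_Iic).trans hXY⟩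

theorem kScattered_iff_weaklyHomeomorphic_to_compact
    {X : Type u} [TopologicalSpace X] [T2Space X] [RegularSpace X] :
    (∀ A : Set X, IsClosed A → A.Nonempty →
      ∃ K : Set X, K ⊆ A ∧ IsCompact K ∧
        ∃ V : Set X, IsOpen V ∧ (A ∩ V).Nonempty ∧ A ∩ V ⊆ K) ↔
    ∃ (Y : Type u) (tY : TopologicalSpace Y),
      CompactSpace Y ∧ T2Space Y ∧ WeaklyHomeomorphic X Y :=
  kScattered_iff_weaklyHomeomorphic_to_compact_general
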